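/- Let $A$ be a random subset of $\{1,\dots,N\}$ with each element included independently with probability $\alpha$, and let $R(A)$ denote the number of nontrivial solutions to $ab = cd$ with $a,b,c,d \in A$ (i.e., quadruples with $a \notin \{c,d\}$). Then $\mathbb{E}[R(A)] \ll \alpha^4 N^2 \log N + \alpha^3 N (\log N)^3$, with an absolute implied constant (for $N \geq 2$). -/

import Mathlib

/-!
By linearity of expectation, `E[R(A)]` is the sum of `α ^ #{a, b, c, d}` over the nontrivial
quadruples in `[1, N]`. Such a quadruple has at least three distinct entries, and four unless
`a = b` or `c = d`. There are at most `E([N])` quadruples, and `E([N]) ≤ 2 N² (1 + log N)` because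
every solution of `ab = cd` is `(g x, y t, g y, x t)`. A quadruple with `a = b` (or `c = d`) is
determined by `a` and a divisor of `a²`, and `∑_{a ≤ N} τ(a²) ≤ ∑_{a ≤ N} τ(a)² ≤ N (1 + log N)³`,
since a pair of divisors of `a` is `(g u, g v)` with `a = g u v w`.
-/

/-- The probability of obtaining the set `S ⊆ {1,…,N}` when each element of
`{1,…,N}` is chosen independently with probability `α`. -/
noncomputable def randomSetProb (N : ℕ) (α : ℝ) (S : Finset ℕ) : ℝ :=
  α ^ S.card * (1 - α) ^ (N - S.card)

/-- The number of nontrivial multiplicative quadruples in `S`: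
quadruples `(a,b,c,d) ∈ S⁴` with `ab = cd`, `a ≠ c` and `a ≠ d`. -/
def nontrivialQuadruples (S : Finset ℕ) : ℕ :=
  ((S ×ˢ S ×ˢ S ×ˢ S).filter
    (fun q => q.1 * q.2.1 = q.2.2.1 * q.2.2.2 ∧
      q.1 ≠ q.2.2.1 ∧ q.1 ≠ q.2.2.2)).card

open Finset Real
open scoped Combinatorics.Additive

theorem sum_randomSetProb_Icc {N : ℕ} (α : ℝ) {T : Finset ℕ} (hT : T ⊆ Icc 1 N) :
    ∑ S ∈ Icc T (Icc 1 N), randomSetProb N α S = α ^ #T := by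
  have hdisj : ∀ U ∈ (Icc 1 N \ T).powerset, Disjoint T U := fun U hU =>
    disjoint_of_subset_right (mem_powerset.1 hU) disjoint_sdiff
  have hinj : Set.InjOn (T ∪ ·) ((Icc 1 N \ T).powerset : Set (Finset ℕ)) := by
    intro U hU V hV hUV
    rw [← union_sdiff_cancel_left (hdisj U hU), ← union_sdiff_cancel_left (hdisj V hV)]
    exact congrArg (· \ T) hUV
  have hcard : #(Icc 1 N \ T) = N - #T := by
    rw [card_sdiff_of_subset hT, Nat.card_Icc, Nat.add_sub_cancel]
  rw [Icc_eq_image_powerset hT, sum_image hinj]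
  calc ∑ U ∈ (Icc 1 N \ T).powerset, randomSetProb N α (T ∪ U)
      = ∑ U ∈ (Icc 1 N \ T).powerset,
          α ^ #T * (α ^ #U * (1 - α) ^ (#(Icc 1 N \ T) - #U)) := by
        refine sum_congr rfl fun U hU => ?_
        rw [randomSetProb, card_union_of_disjoint (hdisj U hU), hcard, pow_add, Nat.sub_add_eq]
        ring
    _ = α ^ #T := by rw [← mul_sum, sum_pow_mul_eq_add_pow, add_sub_cancel, one_pow, mul_one]

theorem sum_randomSetProb_mul_card_filter {ι : Type*} {N : ℕ} (α : ℝ) (Q : Finset ι)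
    (T : ι → Finset ℕ) (hT : ∀ q ∈ Q, T q ⊆ Icc 1 N) :
    ∑ S ∈ (Icc 1 N).powerset, randomSetProb N α S * #{q ∈ Q | T q ⊆ S} =
      ∑ q ∈ Q, α ^ #(T q) := by
  simp_rw [card_filter, Nat.cast_sum, mul_sum]
  rw [sum_comm]
  refine sum_congr rfl fun q hq => ?_
  rw [← sum_randomSetProb_Icc α (hT q hq), Icc_eq_filter_powerset, sum_filter]
  exact sum_congr rfl fun S _ => by split_ifs <;> simp

def nontrivialQuadrupleSet (S : Finset ℕ) : Finset (ℕ × ℕ × ℕ × ℕ) :=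
  {q ∈ S ×ˢ S ×ˢ S ×ˢ S | q.1 * q.2.1 = q.2.2.1 * q.2.2.2 ∧ q.1 ≠ q.2.2.1 ∧ q.1 ≠ q.2.2.2}

def entries (q : ℕ × ℕ × ℕ × ℕ) : Finset ℕ := {q.1, q.2.1, q.2.2.1, q.2.2.2}

theorem nontrivialQuadrupleSet_eq_filter {S V : Finset ℕ} (hS : S ⊆ V) :
    nontrivialQuadrupleSet S = {q ∈ nontrivialQuadrupleSet V | entries q ⊆ S} := by
  ext ⟨a, b, c, d⟩
  simp only [nontrivialQuadrupleSet, entries, mem_filter, mem_product, insert_subset_iff,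
    singleton_subset_iff]
  constructor
  · rintro ⟨⟨ha, hb, hc, hd⟩, h⟩
    exact ⟨⟨⟨hS ha, hS hb, hS hc, hS hd⟩, h⟩, ha, hb, hc, hd⟩
  · rintro ⟨⟨_, h⟩, hS⟩
    exact ⟨hS, h⟩

theorem sum_randomSetProb_mul_nontrivialQuadruples (N : ℕ) (α : ℝ) :
    ∑ S ∈ (Icc 1 N).powerset, randomSetProb N α S * (nontrivialQuadruples S : ℝ) =
      ∑ q ∈ nontrivialQuadrupleSet (Icc 1 N), α ^ #(entries q) := by
  rw [← sum_randomSetProb_mul_card_filter]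
  · refine sum_congr rfl fun S hS => ?_
    rw [← nontrivialQuadrupleSet_eq_filter (mem_powerset.1 hS)]
    rfl
  · rintro ⟨a, b, c, d⟩ hq
    simp only [nontrivialQuadrupleSet, mem_filter, mem_product] at hq
    simp only [entries, insert_subset_iff, singleton_subset_iff]
    exact hq.1

theorem card_entries_eq_four {a b c d : ℕ} (hb : b ≠ 0) (h : a * b = c * d) (hac : a ≠ c)
    (had : a ≠ d) (hab : a ≠ b) (hcd : c ≠ d) : #(entries (a, b, c, d)) = 4 := by
  have hbc : b ≠ c := by
    rintro rfl
    exact had (Nat.eq_of_mul_eq_mul_right (Nat.pos_of_ne_zero hb) (h.trans (mul_comm _ _)))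
  have hbd : b ≠ d := by
    rintro rfl
    exact hac (Nat.eq_of_mul_eq_mul_right (Nat.pos_of_ne_zero hb) h)
  simp [entries, card_insert_of_notMem, *]

theorem three_le_card_entries {a b c d : ℕ} (hb : b ≠ 0) (h : a * b = c * d) (hac : a ≠ c)
    (had : a ≠ d) : 3 ≤ #(entries (a, b, c, d)) := by
  by_cases hcd : c = d
  · subst hcd
    have hab : a ≠ b := by
      rintro rfl
      exact hac (Nat.mul_self_inj.1 h)
    have hbc : b ≠ c := by
      rintro rfl
      exact hab (Nat.eq_of_mul_eq_mul_right (Nat.pos_of_ne_zero hb) h)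
    calc 3 = #{a, b, c} := by simp [card_insert_of_notMem, *]
      _ ≤ _ := card_le_card (by simp [entries])
  · calc 3 = #{a, c, d} := by simp [card_insert_of_notMem, hac, had, hcd]
      _ ≤ _ := card_le_card (by intro x; simp only [entries, mem_insert, mem_singleton]; tauto)

theorem pow_card_entries_le {N : ℕ} {α : ℝ} (h0 : 0 ≤ α) (h1 : α ≤ 1) {q : ℕ × ℕ × ℕ × ℕ}
    (hq : q ∈ nontrivialQuadrupleSet (Icc 1 N)) :
    α ^ #(entries q) ≤ α ^ 4 + if q.1 = q.2.1 ∨ q.2.2.1 = q.2.2.2 then α ^ 3 else 0 := by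
  obtain ⟨a, b, c, d⟩ := q
  simp only [nontrivialQuadrupleSet, mem_filter, mem_product, mem_Icc] at hq
  obtain ⟨⟨-, ⟨hb, -⟩, -⟩, h, hac, had⟩ := hq
  by_cases hdeg : a = b ∨ c = d
  · have : α ^ #(entries (a, b, c, d)) ≤ α ^ 3 :=
      pow_le_pow_of_le_one h0 h1 (three_le_card_entries (by omega) h hac had)
    rw [if_pos hdeg]
    linarith [pow_nonneg h0 4]
  · push Not at hdeg
    rw [card_entries_eq_four (by omega) h hac had hdeg.1 hdeg.2]
    simp [hdeg]

theorem sum_pow_card_entries_le {N : ℕ} {α : ℝ} (h0 : 0 ≤ α) (h1 : α ≤ 1) :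
    ∑ q ∈ nontrivialQuadrupleSet (Icc 1 N), α ^ #(entries q) ≤
      α ^ 4 * #(nontrivialQuadrupleSet (Icc 1 N)) +
        α ^ 3 * #{q ∈ nontrivialQuadrupleSet (Icc 1 N) | q.1 = q.2.1 ∨ q.2.2.1 = q.2.2.2} := by
  calc ∑ q ∈ nontrivialQuadrupleSet (Icc 1 N), α ^ #(entries q)
      ≤ ∑ q ∈ nontrivialQuadrupleSet (Icc 1 N),
          (α ^ 4 + if q.1 = q.2.1 ∨ q.2.2.1 = q.2.2.2 then α ^ 3 else 0) :=
        sum_le_sum fun q hq => pow_card_entries_le h0 h1 hq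
    _ = _ := by rw [sum_add_distrib, sum_const, ← sum_filter, sum_const, nsmul_eq_mul,
        nsmul_eq_mul, mul_comm, mul_comm (α ^ 3)]

theorem sum_Icc_inv_le_one_add_log (N : ℕ) : ∑ k ∈ Icc 1 N, (k : ℝ)⁻¹ ≤ 1 + log N := by
  simpa [harmonic_eq_sum_Icc] using harmonic_le_one_add_log N

theorem exists_eq_mul_of_mul_eq_mul {M : Type*} [CommMonoidWithZero M] [IsCancelMulZero M]
    [DecompositionMonoid M] {a b c d : M} (ha : a ≠ 0) (h : a * b = c * d) :
    ∃ g x y t, a = g * x ∧ c = g * y ∧ b = y * t ∧ d = x * t := by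
  obtain ⟨g, x, ⟨y, rfl⟩, ⟨t, rfl⟩, rfl⟩ := exists_dvd_and_dvd_of_dvd_mul (Dvd.intro b h)
  refine ⟨g, x, y, t, rfl, rfl, mul_left_cancel₀ ha ?_, rfl⟩
  rw [h, mul_mul_mul_comm]

theorem mulEnergy_Icc_le (N : ℕ) :
    Eₘ[Icc 1 N] ≤ ∑ p ∈ Icc 1 N ×ˢ Icc 1 N, (N / max p.1 p.2) ^ 2 := by
  have hcard : ∑ p ∈ Icc 1 N ×ˢ Icc 1 N, (N / max p.1 p.2) ^ 2 =
      #((Icc 1 N ×ˢ Icc 1 N).sigma fun p =>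
        Icc 1 (N / max p.1 p.2) ×ˢ Icc 1 (N / max p.1 p.2)) := by
    simp [card_sigma, sq]
  rw [hcard, mulEnergy]
  -- `((a, c), (b, d)) = ((g x, g y), (y t, x t))`, and then `g, t ≤ N / max x y`
  refine card_le_card_of_surjOn
    (fun r => ((r.2.1 * r.1.1, r.2.1 * r.1.2), (r.1.2 * r.2.2, r.1.1 * r.2.2))) ?_
  rintro ⟨⟨a, c⟩, b, d⟩ hq
  simp only [coe_filter, mem_product, mem_Icc, Set.mem_ofPred_eq] at hq
  obtain ⟨⟨⟨⟨ha, haN⟩, hc, hcN⟩, ⟨hb, hbN⟩, hd, hdN⟩, h⟩ := hq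
  obtain ⟨g, x, y, t, rfl, rfl, rfl, rfl⟩ := exists_eq_mul_of_mul_eq_mul (by omega) h
  have hg := left_ne_zero_of_mul (by omega : g * x ≠ 0)
  have hx := right_ne_zero_of_mul (by omega : g * x ≠ 0)
  have hy := right_ne_zero_of_mul (by omega : g * y ≠ 0)
  have ht := right_ne_zero_of_mul (by omega : x * t ≠ 0)
  have hmax : ∀ k, k * x ≤ N → k * y ≤ N → k ≤ N / max x y := fun k hkx hky =>
    (Nat.le_div_iff_mul_le (by omega)).2 (by rcases le_total x y with hxy | hxy <;> simp [*])
  refine ⟨⟨(x, y), (g, t)⟩, ?_, rfl⟩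
  simp only [coe_sigma, Set.mem_sigma_iff, coe_product, Set.mem_prod, mem_coe, mem_Icc]
  refine ⟨⟨⟨by omega, (Nat.le_mul_of_pos_right x (by omega)).trans hdN⟩,
    by omega, (Nat.le_mul_of_pos_right y (by omega)).trans hbN⟩,
    ⟨by omega, hmax g haN hcN⟩, by omega, hmax t (by rwa [mul_comm]) (by rwa [mul_comm])⟩

theorem sum_inv_sq_max_le (N : ℕ) :
    ∑ p ∈ Icc 1 N ×ˢ Icc 1 N, ((max p.1 p.2 : ℕ) ^ 2 : ℝ)⁻¹ ≤ 2 * ∑ k ∈ Icc 1 N, (k : ℝ)⁻¹ := by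
  -- `(max x y ^ 2)⁻¹ ≤ f (x, y) + f (y, x)`, and `f` sums to the harmonic sum as `#{y ≤ x} = x`
  set f : ℕ × ℕ → ℝ := fun p => if p.2 ≤ p.1 then ((p.1 : ℝ) ^ 2)⁻¹ else 0
  have hf : ∑ p ∈ Icc 1 N ×ˢ Icc 1 N, f p = ∑ k ∈ Icc 1 N, (k : ℝ)⁻¹ := by
    rw [sum_product]
    refine sum_congr rfl fun x hx => ?_
    have hfilter : {y ∈ Icc 1 N | y ≤ x} = Icc 1 x := by
      ext y
      simp only [mem_filter, mem_Icc] at hx ⊢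
      omega
    rw [← sum_filter, hfilter]
    simp only [sum_const, Nat.card_Icc, Nat.add_sub_cancel, nsmul_eq_mul]
    have : (x : ℝ) ≠ 0 := Nat.cast_ne_zero.2 (by simp only [mem_Icc] at hx; omega)
    field_simp
  have hf_swap : ∑ p ∈ Icc 1 N ×ˢ Icc 1 N, f p.swap = ∑ p ∈ Icc 1 N ×ˢ Icc 1 N, f p := by
    rw [sum_product, sum_product, sum_comm]
    rfl
  calc ∑ p ∈ Icc 1 N ×ˢ Icc 1 N, ((max p.1 p.2 : ℕ) ^ 2 : ℝ)⁻¹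
      ≤ ∑ p ∈ Icc 1 N ×ˢ Icc 1 N, (f p + f p.swap) := by
        refine sum_le_sum fun p _ => ?_
        have hf0 : ∀ p, 0 ≤ f p := fun p => by dsimp only [f]; split_ifs <;> positivity
        rcases le_total p.2 p.1 with h | h
        · exact le_add_of_le_of_nonneg (by simp [f, h]) (hf0 _)
        · exact le_add_of_nonneg_of_le (hf0 _) (by simp [f, h])
    _ = 2 * ∑ k ∈ Icc 1 N, (k : ℝ)⁻¹ := by rw [sum_add_distrib, hf_swap, hf, two_mul]

theorem mulEnergy_Icc_le_mul_log (N : ℕ) : (Eₘ[Icc 1 N] : ℝ) ≤ 2 * N ^ 2 * (1 + log N) := by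
  calc (Eₘ[Icc 1 N] : ℝ) ≤ ∑ p ∈ Icc 1 N ×ˢ Icc 1 N, ((N / max p.1 p.2 : ℕ) : ℝ) ^ 2 := by
        exact_mod_cast mulEnergy_Icc_le N
    _ ≤ ∑ p ∈ Icc 1 N ×ˢ Icc 1 N, (N : ℝ) ^ 2 * ((max p.1 p.2 : ℕ) ^ 2 : ℝ)⁻¹ := by
        refine sum_le_sum fun p _ => ?_
        rw [← inv_pow, ← mul_pow, ← div_eq_mul_inv]
        exact pow_le_pow_left₀ (Nat.cast_nonneg _) Nat.cast_div_le 2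
    _ ≤ N ^ 2 * (2 * (1 + log N)) := by
        rw [← mul_sum]
        gcongr
        exact (sum_inv_sq_max_le N).trans (by gcongr; exact sum_Icc_inv_le_one_add_log N)
    _ = 2 * N ^ 2 * (1 + log N) := by ring

theorem card_nontrivialQuadrupleSet_le_mulEnergy (S : Finset ℕ) :
    #(nontrivialQuadrupleSet S) ≤ Eₘ[S] := by
  rw [mulEnergy]
  refine card_le_card_of_injOn (fun q => ((q.1, q.2.2.1), (q.2.1, q.2.2.2))) ?_ ?_
  · rintro ⟨a, b, c, d⟩ hq
    simp only [nontrivialQuadrupleSet, coe_filter, mem_product, Set.mem_ofPred_eq] at hq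
    simp only [coe_filter, mem_product, Set.mem_ofPred_eq]
    exact ⟨⟨⟨hq.1.1, hq.1.2.2.1⟩, hq.1.2.1, hq.1.2.2.2⟩, hq.2.1⟩
  · rintro ⟨a, b, c, d⟩ - ⟨a', b', c', d'⟩ - h
    simp only [Prod.mk.injEq] at h ⊢
    tauto

theorem card_divisors_mul_self_le (a : ℕ) : #(a * a).divisors ≤ #a.divisors ^ 2 := by
  rw [Nat.divisors_mul, sq]
  exact card_mul_le

theorem exists_eq_mul_of_dvd_of_dvd {d₁ d₂ a : ℕ} (h₁ : d₁ ∣ a) (h₂ : d₂ ∣ a) :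
    ∃ g u v w, d₁ = g * u ∧ d₂ = g * v ∧ a = g * u * v * w := by
  obtain ⟨u, v, huv, hu, hv⟩ := Nat.exists_coprime d₁ d₂
  have hlcm : Nat.lcm d₁ d₂ = Nat.gcd d₁ d₂ * u * v := by
    rw [mul_assoc, ← huv.lcm_eq_mul, ← Nat.lcm_mul_left, ← mul_comm u, ← mul_comm v, ← hu, ← hv]
  obtain ⟨w, hw⟩ := Nat.lcm_dvd h₁ h₂
  exact ⟨Nat.gcd d₁ d₂, u, v, w, hu.trans (mul_comm _ _), hv.trans (mul_comm _ _), hlcm ▸ hw⟩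

theorem sum_sq_card_divisors_le (N : ℕ) :
    ∑ a ∈ Icc 1 N, #a.divisors ^ 2 ≤
      ∑ r ∈ Icc 1 N ×ˢ Icc 1 N ×ˢ Icc 1 N, N / (r.1 * r.2.1 * r.2.2) := by
  have hlhs : ∑ a ∈ Icc 1 N, #a.divisors ^ 2 =
      #((Icc 1 N).sigma fun a => a.divisors ×ˢ a.divisors) := by
    simp [card_sigma, sq]
  have hrhs : ∑ r ∈ Icc 1 N ×ˢ Icc 1 N ×ˢ Icc 1 N, N / (r.1 * r.2.1 * r.2.2) =
      #((Icc 1 N ×ˢ Icc 1 N ×ˢ Icc 1 N).sigma fun r => Icc 1 (N / (r.1 * r.2.1 * r.2.2))) := by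
    simp [card_sigma]
  rw [hlhs, hrhs]
  refine card_le_card_of_surjOn (fun r =>
    (⟨r.1.1 * r.1.2.1 * r.1.2.2 * r.2, (r.1.1 * r.1.2.1, r.1.1 * r.1.2.2)⟩ : Σ _ : ℕ, ℕ × ℕ)) ?_
  rintro ⟨a, d₁, d₂⟩ hq
  simp only [coe_sigma, Set.mem_sigma_iff, coe_product, Set.mem_prod, mem_coe, mem_Icc,
    Nat.mem_divisors] at hq
  obtain ⟨⟨ha, haN⟩, ⟨h₁, -⟩, h₂, -⟩ := hq
  obtain ⟨g, u, v, w, rfl, rfl, rfl⟩ := exists_eq_mul_of_dvd_of_dvd h₁ h₂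
  have hle : ∀ k, k ∣ g * u * v * w → k ≤ N := fun k hk => (Nat.le_of_dvd ha hk).trans haN
  refine ⟨⟨(g, u, v), w⟩, ?_, rfl⟩
  simp only [coe_sigma, Set.mem_sigma_iff, coe_product, Set.mem_prod, mem_coe, mem_Icc]
  have h0 : g * u * v * w ≠ 0 := by omega
  simp only [ne_eq, mul_eq_zero, not_or] at h0
  obtain ⟨⟨⟨hg, hu⟩, hv⟩, hw⟩ := h0
  refine ⟨⟨⟨by omega, hle g ⟨u * v * w, by ring⟩⟩, ⟨by omega, hle u ⟨g * v * w, by ring⟩⟩,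
    by omega, hle v ⟨g * u * w, by ring⟩⟩, by omega, ?_⟩
  exact (Nat.le_div_iff_mul_le (by positivity)).2 (by rw [mul_comm]; exact haN)

theorem sum_card_divisors_mul_self_le (N : ℕ) :
    (∑ a ∈ Icc 1 N, #(a * a).divisors : ℝ) ≤ N * (1 + log N) ^ 3 := by
  have hprod : ∑ r ∈ Icc 1 N ×ˢ Icc 1 N ×ˢ Icc 1 N, ((r.1 * r.2.1 * r.2.2 : ℕ) : ℝ)⁻¹ =
      (∑ k ∈ Icc 1 N, (k : ℝ)⁻¹) ^ 3 := by
    rw [pow_three, sum_mul_sum, sum_mul_sum]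
    simp only [sum_product, Nat.cast_mul, mul_inv, mul_assoc, mul_sum]
  calc (∑ a ∈ Icc 1 N, #(a * a).divisors : ℝ)
      ≤ ∑ r ∈ Icc 1 N ×ˢ Icc 1 N ×ˢ Icc 1 N, ((N / (r.1 * r.2.1 * r.2.2) : ℕ) : ℝ) := by
        exact_mod_cast (sum_le_sum fun a _ => card_divisors_mul_self_le a).trans
          (sum_sq_card_divisors_le N)
    _ ≤ ∑ r ∈ Icc 1 N ×ˢ Icc 1 N ×ˢ Icc 1 N, (N : ℝ) * ((r.1 * r.2.1 * r.2.2 : ℕ) : ℝ)⁻¹ :=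
        sum_le_sum fun r _ => Nat.cast_div_le.trans_eq (div_eq_mul_inv _ _)
    _ ≤ N * (1 + log N) ^ 3 := by
        rw [← mul_sum, hprod]
        gcongr
        exact sum_Icc_inv_le_one_add_log N

theorem card_filter_fst_eq_snd_le (N : ℕ) :
    #{q ∈ nontrivialQuadrupleSet (Icc 1 N) | q.1 = q.2.1} ≤
      ∑ a ∈ Icc 1 N, #(a * a).divisors := by
  rw [← card_sigma]
  refine card_le_card_of_injOn (fun q => (⟨q.1, q.2.2.1⟩ : Σ _ : ℕ, ℕ)) ?_ ?_
  · rintro ⟨a, b, c, d⟩ hq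
    simp only [nontrivialQuadrupleSet, coe_filter, mem_filter, mem_product, mem_Icc,
      Set.mem_ofPred_eq] at hq
    obtain ⟨⟨⟨ha, -, -, -⟩, h, -⟩, rfl⟩ := hq
    simp only [coe_sigma, Set.mem_sigma_iff, mem_coe, mem_Icc, Nat.mem_divisors]
    exact ⟨ha, Dvd.intro d h.symm, mul_self_ne_zero.2 (by omega)⟩
  · rintro ⟨a, b, c, d⟩ hq ⟨a', b', c', d'⟩ hq' h
    simp only [nontrivialQuadrupleSet, coe_filter, mem_filter, mem_product, mem_Icc,
      Set.mem_ofPred_eq] at hq hq'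
    simp only [Sigma.mk.injEq, heq_eq_eq] at h
    obtain ⟨rfl, rfl⟩ := h
    obtain ⟨⟨⟨-, -, ⟨hc, -⟩, -⟩, h, -⟩, rfl⟩ := hq
    obtain ⟨⟨-, h', -⟩, rfl⟩ := hq'
    simp only [Prod.mk.injEq, true_and]
    exact Nat.eq_of_mul_eq_mul_left hc (h.symm.trans h')

theorem card_filter_third_eq_fourth_le (N : ℕ) :
    #{q ∈ nontrivialQuadrupleSet (Icc 1 N) | q.2.2.1 = q.2.2.2} ≤
      ∑ a ∈ Icc 1 N, #(a * a).divisors := by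
  rw [← card_sigma]
  refine card_le_card_of_injOn (fun q => (⟨q.2.2.1, q.1⟩ : Σ _ : ℕ, ℕ)) ?_ ?_
  · rintro ⟨a, b, c, d⟩ hq
    simp only [nontrivialQuadrupleSet, coe_filter, mem_filter, mem_product, mem_Icc,
      Set.mem_ofPred_eq] at hq
    obtain ⟨⟨⟨-, -, hc, -⟩, h, -⟩, rfl⟩ := hq
    simp only [coe_sigma, Set.mem_sigma_iff, mem_coe, mem_Icc, Nat.mem_divisors]
    exact ⟨hc, Dvd.intro b h, mul_self_ne_zero.2 (by omega)⟩
  · rintro ⟨a, b, c, d⟩ hq ⟨a', b', c', d'⟩ hq' h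
    simp only [nontrivialQuadrupleSet, coe_filter, mem_filter, mem_product, mem_Icc,
      Set.mem_ofPred_eq] at hq hq'
    simp only [Sigma.mk.injEq, heq_eq_eq] at h
    obtain ⟨rfl, rfl⟩ := h
    obtain ⟨⟨⟨⟨ha, -⟩, -⟩, h, -⟩, rfl⟩ := hq
    obtain ⟨⟨-, h', -⟩, rfl⟩ := hq'
    simp only [Prod.mk.injEq, true_and, and_true]
    exact Nat.eq_of_mul_eq_mul_left ha (h.trans h'.symm)

theorem card_filter_fst_eq_snd_or_third_eq_fourth_le (N : ℕ) :
    #{q ∈ nontrivialQuadrupleSet (Icc 1 N) | q.1 = q.2.1 ∨ q.2.2.1 = q.2.2.2} ≤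
      2 * ∑ a ∈ Icc 1 N, #(a * a).divisors := by
  rw [filter_or, two_mul]
  exact (card_union_le _ _).trans
    (add_le_add (card_filter_fst_eq_snd_le N) (card_filter_third_eq_fourth_le N))

theorem one_add_log_le_three_mul_log {N : ℕ} (hN : 2 ≤ N) : 1 + log N ≤ 3 * log N := by
  have : log 2 ≤ log N := log_le_log two_pos (by exact_mod_cast hN)
  linarith [log_two_gt_d9]

/-- There is an absolute constant `C` such that for all `N ≥ 2` and all
`0 ≤ α < 1`, the expected number of nontrivial solutions to `ab = cd` in the
random set `A ⊆ {1,…,N}` satisfies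
`E[R(A)] ≤ C (α⁴ N² log N + α³ N (log N)³)`. -/
theorem expected_nontrivialQuadruples_le :
    ∃ C : ℝ, 0 < C ∧ ∀ N : ℕ, 2 ≤ N → ∀ α : ℝ, 0 ≤ α → α < 1 →
      ∑ S ∈ (Finset.Icc 1 N).powerset,
        randomSetProb N α S * (nontrivialQuadruples S : ℝ) ≤
      C * (α ^ 4 * (N : ℝ) ^ 2 * Real.log N +
        α ^ 3 * (N : ℝ) * Real.log N ^ 3) := by
  refine ⟨54, by norm_num, fun N hN α hα0 hα1 => ?_⟩
  set Q := nontrivialQuadrupleSet (Icc 1 N)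
  have hQ : (#Q : ℝ) ≤ 2 * N ^ 2 * (1 + log N) :=
    (Nat.cast_le.2 (card_nontrivialQuadrupleSet_le_mulEnergy _)).trans
      (mulEnergy_Icc_le_mul_log N)
  have hdeg : (#{q ∈ Q | q.1 = q.2.1 ∨ q.2.2.1 = q.2.2.2} : ℝ) ≤ 2 * (N * (1 + log N) ^ 3) :=
    (Nat.cast_le.2 (card_filter_fst_eq_snd_or_third_eq_fourth_le N)).trans
      (by push_cast; gcongr; exact sum_card_divisors_mul_self_le N)
  have hlog := one_add_log_le_three_mul_log hN
  rw [sum_randomSetProb_mul_nontrivialQuadruples]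
  calc _ ≤ α ^ 4 * #Q + α ^ 3 * #{q ∈ Q | q.1 = q.2.1 ∨ q.2.2.1 = q.2.2.2} :=
        sum_pow_card_entries_le hα0 hα1.le
    _ ≤ α ^ 4 * (2 * N ^ 2 * (3 * log N)) + α ^ 3 * (2 * (N * (3 * log N) ^ 3)) := by
        gcongr
        · exact hQ.trans (by gcongr)
        · exact hdeg.trans (by gcongr)
    _ ≤ 54 * (α ^ 4 * (N : ℝ) ^ 2 * log N + α ^ 3 * (N : ℝ) * log N ^ 3) := by
        nlinarith [show 0 ≤ α ^ 4 * (N : ℝ) ^ 2 * log N by positivity]
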